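/- arXiv:1609.07644 — 4 statements merged into one kernel-verified Lean document; each statement's English description precedes it below -/
import Mathlib

section
/- Let a, b > 0, θ ∈ [0,1], l ∈ ℝ, and let κ : [0,∞) → ℝ be a measurable function taking only the values a and b such that δ·Leb({x ∈ [0, 1/δ] : κ(x) = b}) → θ as δ → 0⁺, where Leb denotes Lebesgue measure. Then lim_{δ→0⁺} ∫₀¹ κ(x/δ)^{-1} dx = (1 − θ)/a + θ/b, and consequently the tensile forces F^δ := l·(∫₀¹ κ(x/δ)^{-1} dx)^{-1} converge to l·((1 − θ)/a + θ/b)^{-1} as δ → 0⁺. -/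
/-!
On `[0, 1]` the integrand `κ(x/δ)⁻¹` equals `a⁻¹`, except on the set where `κ(x/δ) = b`, where
it equals `b⁻¹`. After the substitution `y = x/δ` that set has measure
`δ·Leb({y ∈ [0, 1/δ] : κ(y) = b})`, so for every `δ > 0` the integral is the affine function
`a⁻¹ + (b⁻¹ - a⁻¹)·δ·Leb(…)` of the volume fraction, and it converges with it. The forces
converge because the limit is a convex combination of `a⁻¹, b⁻¹ > 0`, so inversion is
continuous there.
-/

open MeasureTheory Set Filter Topology

theorem setIntegral_eq_of_two_valued {α E : Type*} [MeasurableSpace α]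
    [NormedAddCommGroup E] [NormedSpace ℝ E] [CompleteSpace E] {μ : Measure α}
    {s t : Set α} (hs : MeasurableSet s) (ht : MeasurableSet t) (hμs : μ s ≠ ⊤)
    {φ : α → E} {c d : E} (hc : ∀ x ∈ s \ t, φ x = c) (hd : ∀ x ∈ s ∩ t, φ x = d) :
    ∫ x in s, φ x ∂μ = μ.real s • c + μ.real (s ∩ t) • (d - c) := by
  have hsplit : EqOn φ (fun x => c + t.indicator (fun _ => d - c) x) s := by
    intro x hx
    by_cases hxt : x ∈ t
    · simp [hd x ⟨hx, hxt⟩, hxt]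
    · simp [hc x ⟨hx, hxt⟩, hxt]
  have hint : IntegrableOn (fun _ => d - c) s μ := integrableOn_const hμs
  rw [setIntegral_congr_fun hs hsplit, integral_add (integrableOn_const hμs (C := c))
    (hint.indicator ht), setIntegral_indicator ht, setIntegral_const, setIntegral_const]

theorem volume_Icc_inter_preimage_div {δ : ℝ} (hδ : 0 < δ) (A : Set ℝ) :
    volume (Icc 0 1 ∩ (· / δ) ⁻¹' A) = ENNReal.ofReal δ * volume (Icc 0 (1 / δ) ∩ A) := by
  have hpre : Icc 0 1 ∩ (· / δ) ⁻¹' A = (· / δ) ⁻¹' (Icc 0 (1 / δ) ∩ A) := by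
    ext x
    simp only [mem_inter_iff, mem_preimage, mem_Icc, div_le_div_iff_of_pos_right hδ,
      div_nonneg_iff, hδ.le, hδ.not_ge, and_true, and_false, or_false]
  simp_rw [hpre, div_eq_mul_inv]
  rw [Real.volume_preimage_mul_right (inv_ne_zero hδ.ne'), inv_inv, abs_of_pos hδ]

theorem intervalIntegral_comp_div_of_two_valued {κ g : ℝ → ℝ} {a b δ : ℝ} (hδ : 0 < δ)
    (hκm : Measurable κ) (hval : ∀ x, 0 ≤ x → κ x = a ∨ κ x = b) :
    ∫ x in (0 : ℝ)..1, g (κ (x / δ)) =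
      g a + (g b - g a) * (δ * (volume {x | x ∈ Icc 0 (1 / δ) ∧ κ x = b}).toReal) := by
  have ht : MeasurableSet ((· / δ) ⁻¹' (κ ⁻¹' {b})) :=
    (measurable_div_const δ) (hκm (measurableSet_singleton b))
  have hc : ∀ x ∈ Icc (0 : ℝ) 1 \ (· / δ) ⁻¹' (κ ⁻¹' {b}), g (κ (x / δ)) = g a :=
    fun x ⟨hx, hxb⟩ => by rw [(hval _ (div_nonneg hx.1 hδ.le)).resolve_right hxb]
  have hd : ∀ x ∈ Icc (0 : ℝ) 1 ∩ (· / δ) ⁻¹' (κ ⁻¹' {b}), g (κ (x / δ)) = g b :=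
    fun x hx => congrArg g hx.2
  have hset : {x | x ∈ Icc 0 (1 / δ) ∧ κ x = b} = Icc 0 (1 / δ) ∩ κ ⁻¹' {b} := rfl
  rw [hset, intervalIntegral.integral_of_le zero_le_one, ← integral_Icc_eq_integral_Ioc,
    setIntegral_eq_of_two_valued measurableSet_Icc ht measure_Icc_lt_top.ne hc hd,
    Real.volume_real_Icc_of_le zero_le_one, measureReal_def, volume_Icc_inter_preimage_div hδ,
    ENNReal.toReal_mul, ENNReal.toReal_ofReal hδ.le, smul_eq_mul, smul_eq_mul]
  ring

theorem one_sub_div_add_div_pos {a b θ : ℝ} (ha : 0 < a) (hb : 0 < b) (hθ : θ ∈ Icc (0 : ℝ) 1) :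
    0 < (1 - θ) / a + θ / b := by
  obtain ⟨h0, h1⟩ := hθ
  rcases h1.lt_or_eq with h | rfl
  · have := div_pos (sub_pos.2 h) ha
    positivity
  · simpa using hb

open MeasureTheory in
/-- Non-periodic one-dimensional homogenization: if the two-valued modulus `κ` has
asymptotic volume fraction `θ` of the phase with value `b`, in the sense that
`δ·Leb({x ∈ [0,1/δ] : κ(x) = b}) → θ` as `δ → 0⁺`, then `∫₀¹ κ(x/δ)⁻¹ dx` converges to
`(1-θ)/a + θ/b` and the tensile forces `F^δ = l·(∫₀¹ κ(x/δ)⁻¹ dx)⁻¹` converge to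
`l·((1-θ)/a + θ/b)⁻¹`. -/
theorem stmt4 (a b θ l : ℝ) (ha : 0 < a) (hb : 0 < b) (hθ : θ ∈ Set.Icc (0 : ℝ) 1)
    (κ : ℝ → ℝ) (hκm : Measurable κ)
    (hval : ∀ x : ℝ, 0 ≤ x → κ x = a ∨ κ x = b)
    (hfrac : Filter.Tendsto
      (fun δ : ℝ => δ * (volume {x : ℝ | x ∈ Set.Icc 0 (1 / δ) ∧ κ x = b}).toReal)
      (nhdsWithin 0 (Set.Ioi 0)) (nhds θ)) :
    Filter.Tendsto (fun δ : ℝ => ∫ x in (0 : ℝ)..1, (κ (x / δ))⁻¹)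
      (nhdsWithin 0 (Set.Ioi 0)) (nhds ((1 - θ) / a + θ / b)) ∧
    Filter.Tendsto (fun δ : ℝ => l * (∫ x in (0 : ℝ)..1, (κ (x / δ))⁻¹)⁻¹)
      (nhdsWithin 0 (Set.Ioi 0)) (nhds (l * ((1 - θ) / a + θ / b)⁻¹)) := by
  have hlimit : a⁻¹ + (b⁻¹ - a⁻¹) * θ = (1 - θ) / a + θ / b := by
    field_simp
    ring
  have hintegral : Tendsto (fun δ : ℝ => ∫ x in (0 : ℝ)..1, (κ (x / δ))⁻¹)
      (𝓝[>] 0) (𝓝 ((1 - θ) / a + θ / b)) := by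
    rw [← hlimit]
    refine ((hfrac.const_mul (b⁻¹ - a⁻¹)).const_add a⁻¹).congr' ?_
    filter_upwards [self_mem_nhdsWithin] with δ hδ
    exact (intervalIntegral_comp_div_of_two_valued hδ hκm hval).symm
  exact ⟨hintegral, (hintegral.inv₀ (one_sub_div_add_div_pos ha hb hθ).ne').const_mul l⟩
end

section
/- Let κ_met, κ_cer > 0, θ ∈ [0,1], l ∈ ℝ, and let (X_q)_{q ∈ ℕ} be an independent, identically distributed sequence of {0,1}-valued random variables with P(X_q = 1) = θ. Define the random longitudinal modulus ω(x) := κ_met + (κ_cer − κ_met)·X_{⌊x⌋} for x ≥ 0. Then almost surely, the tensile forces F^δ(ω) := l·(∫₀¹ ω(x/δ)^{-1} dx)^{-1} converge as δ → 0⁺ to l·((1 − θ)/κ_met + θ/κ_cer)^{-1}, which equals both the homogenized force F^hom and the force F^ECM produced by the one-dimensional embedded cell method. -/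
/-!
The substitution `y = x / δ` turns `∫₀¹ ω(x/δ)⁻¹ dx` into the mean of the step function
`y ↦ ω_{⌊y⌋}⁻¹` over `[0, 1/δ]`, which is a Cesàro mean of the bounded i.i.d. variables
`ω_q⁻¹` up to one partial cell of weight at most `δ`. By the strong law of large numbers
these means converge almost surely to `E[ω_0⁻¹] = (1 - θ)/κ_met + θ/κ_cer > 0`, and inverting
gives the limit of the forces.
-/

open MeasureTheory ProbabilityTheory Filter Topology Finset

section NatFloor

variable {F : Type*} [NormedAddCommGroup F] {g : ℕ → F} {C : ℝ}

lemma intervalIntegrable_comp_natFloor (hC : ∀ q, ‖g q‖ ≤ C) (a b : ℝ) :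
    IntervalIntegrable (fun y => g ⌊y⌋₊) volume a b :=
  (intervalIntegrable_const (c := C)).mono_fun
    (StronglyMeasurable.of_discrete.comp_measurable Nat.measurable_floor).aestronglyMeasurable
    (.of_forall fun _ => (hC _).trans (le_abs_self C))

variable [NormedSpace ℝ F] [CompleteSpace F]

lemma integral_comp_natFloor_cell (q : ℕ) : ∫ y in (q : ℝ)..q + 1, g ⌊y⌋₊ = g q := by
  rw [intervalIntegral.integral_of_le (by linarith), integral_Ioc_eq_integral_Ioo,
    setIntegral_congr_fun measurableSet_Ioo
      fun y hy => congrArg g (Nat.floor_eq_on_Ico q y (Set.Ioo_subset_Ico_self hy)),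
    setIntegral_const]
  simp

lemma integral_comp_natFloor_eq_sum (hC : ∀ q, ‖g q‖ ≤ C) (n : ℕ) :
    ∫ y in (0 : ℝ)..n, g ⌊y⌋₊ = ∑ q ∈ range n, g q := by
  have := intervalIntegral.sum_integral_adjacent_intervals (a := Nat.cast) (n := n)
    fun k _ => intervalIntegrable_comp_natFloor hC _ _
  simp only [Nat.cast_zero, Nat.cast_succ, integral_comp_natFloor_cell] at this
  exact this.symm

theorem tendsto_average_integral_comp_natFloor {E : F} (hC : ∀ q, ‖g q‖ ≤ C)
    (h : Tendsto (fun n : ℕ => (n : ℝ)⁻¹ • ∑ q ∈ range n, g q) atTop (𝓝 E)) :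
    Tendsto (fun T : ℝ => T⁻¹ • ∫ y in (0 : ℝ)..T, g ⌊y⌋₊) atTop (𝓝 E) := by
  have hsum : Tendsto (fun T : ℝ => (⌊T⌋₊ / T) • ((⌊T⌋₊ : ℝ)⁻¹ • ∑ q ∈ range ⌊T⌋₊, g q))
      atTop (𝓝 E) := by
    simpa using (tendsto_nat_floor_div_atTop (R := ℝ)).smul (h.comp tendsto_nat_floor_atTop)
  have htail : Tendsto (fun T : ℝ => T⁻¹ • ∫ y in (⌊T⌋₊ : ℝ)..T, g ⌊y⌋₊) atTop (𝓝 0) := by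
    refine squeeze_zero_norm' ?_ (by simpa using tendsto_inv_atTop_zero.mul_const C)
    filter_upwards [eventually_gt_atTop 0] with T hT
    have hfrac : |T - ⌊T⌋₊| ≤ 1 := by
      rw [abs_of_nonneg (sub_nonneg.2 (Nat.floor_le hT.le))]
      linarith [Nat.lt_floor_add_one T]
    have hC0 : 0 ≤ C := (norm_nonneg _).trans (hC 0)
    rw [norm_smul, norm_inv, Real.norm_of_nonneg hT.le]
    gcongr
    exact (intervalIntegral.norm_integral_le_of_norm_le_const fun y _ => hC ⌊y⌋₊).trans
      (mul_le_of_le_one_right hC0 hfrac)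
  refine (add_zero E ▸ hsum.add htail).congr' ?_
  filter_upwards [eventually_ge_atTop 1] with T hT
  have hfloor : (⌊T⌋₊ : ℝ) ≠ 0 := by exact_mod_cast (Nat.floor_pos.2 hT).ne'
  have hsplit := intervalIntegral.integral_add_adjacent_intervals (a := 0) (b := (⌊T⌋₊ : ℝ))
    (c := T) (intervalIntegrable_comp_natFloor hC _ _) (intervalIntegrable_comp_natFloor hC _ _)
  rw [integral_comp_natFloor_eq_sum hC] at hsplit
  rw [← hsplit, smul_add, smul_smul]
  congr 2
  field_simp

theorem tendsto_integral_comp_natFloor_div {E : F} (hC : ∀ q, ‖g q‖ ≤ C)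
    (h : Tendsto (fun n : ℕ => (n : ℝ)⁻¹ • ∑ q ∈ range n, g q) atTop (𝓝 E)) :
    Tendsto (fun δ : ℝ => ∫ x in (0 : ℝ)..1, g ⌊x / δ⌋₊) (𝓝[>] 0) (𝓝 E) := by
  refine ((tendsto_average_integral_comp_natFloor hC h).comp tendsto_inv_nhdsGT_zero).congr' ?_
  filter_upwards [self_mem_nhdsWithin] with δ hδ
  simpa using (intervalIntegral.integral_comp_div (a := 0) (b := 1) (fun y => g ⌊y⌋₊) hδ.ne').symm

end NatFloor

section ZeroOneValued

variable {Ω : Type*} [MeasurableSpace Ω] {μ : Measure Ω} {X : Ω → ℝ}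

lemma map_eq_of_forall_eq_zero_or_one (hX : Measurable X) (hval : ∀ ω, X ω = 0 ∨ X ω = 1) :
    μ.map X = μ {ω | X ω = 1} • Measure.dirac 1 + μ {ω | X ω = 1}ᶜ • Measure.dirac 0 := by
  have hA : MeasurableSet {ω | X ω = 1} := measurableSet_eq_fun hX measurable_const
  have hone : X =ᵐ[μ.restrict {ω | X ω = 1}] fun _ => 1 :=
    ae_restrict_of_forall_mem hA fun _ h => h
  have hzero : X =ᵐ[μ.restrict {ω | X ω = 1}ᶜ] fun _ => 0 :=
    ae_restrict_of_forall_mem hA.compl fun ω h => (hval ω).resolve_right h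
  conv_lhs => rw [← Measure.restrict_add_restrict_compl (μ := μ) hA]
  rw [Measure.map_add _ _ hX, Measure.map_congr hone, Measure.map_congr hzero,
    Measure.map_const, Measure.map_const, Measure.restrict_apply_univ,
    Measure.restrict_apply_univ]

lemma identDistrib_of_forall_eq_zero_or_one {Ω' : Type*} [MeasurableSpace Ω'] {μ' : Measure Ω'}
    [IsProbabilityMeasure μ] [IsProbabilityMeasure μ'] {X' : Ω' → ℝ}
    (hX : Measurable X) (hX' : Measurable X') (hval : ∀ ω, X ω = 0 ∨ X ω = 1)
    (hval' : ∀ ω, X' ω = 0 ∨ X' ω = 1) (h : μ {ω | X ω = 1} = μ' {ω | X' ω = 1}) :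
    IdentDistrib X X' μ μ' where
  aemeasurable_fst := hX.aemeasurable
  aemeasurable_snd := hX'.aemeasurable
  map_eq := by
    rw [map_eq_of_forall_eq_zero_or_one hX hval, map_eq_of_forall_eq_zero_or_one hX' hval',
      prob_compl_eq_one_sub (measurableSet_eq_fun hX measurable_const),
      prob_compl_eq_one_sub (measurableSet_eq_fun hX' measurable_const), h]

lemma integral_comp_of_forall_eq_zero_or_one [IsProbabilityMeasure μ] (hX : Measurable X)
    (hval : ∀ ω, X ω = 0 ∨ X ω = 1) {f : ℝ → ℝ} (hf : Measurable f) :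
    ∫ ω, f (X ω) ∂μ = μ.real {ω | X ω = 1} * f 1 + (1 - μ.real {ω | X ω = 1}) * f 0 := by
  rw [← integral_map hX.aemeasurable hf.aestronglyMeasurable,
    map_eq_of_forall_eq_zero_or_one hX hval,
    integral_add_measure (.smul_measure (integrable_dirac enorm_lt_top) (measure_ne_top _ _))
      (.smul_measure (integrable_dirac enorm_lt_top) (measure_ne_top _ _)),
    integral_smul_measure, integral_smul_measure, integral_dirac, integral_dirac,
    prob_compl_eq_one_sub (measurableSet_eq_fun hX measurable_const), measureReal_def,
    ENNReal.toReal_sub_of_le prob_le_one ENNReal.one_ne_top]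
  simp

end ZeroOneValued

open MeasureTheory ProbabilityTheory in
/-- Stochastic homogenization of the one-dimensional tensile test: for the random
longitudinal modulus `ω(x) = κ_met + (κ_cer - κ_met)·X_{⌊x⌋}` built from i.i.d.
Bernoulli(θ) random variables, almost surely the tensile forces
`F^δ(ω) = l·(∫₀¹ ω(x/δ)⁻¹ dx)⁻¹` converge as `δ → 0⁺` to
`l·((1-θ)/κ_met + θ/κ_cer)⁻¹`, the common value of the homogenized force `F^hom` and
the embedded cell force `F^ECM`. -/
theorem stmt6 {Ω : Type*} [MeasureSpace Ω] [IsProbabilityMeasure (ℙ : Measure Ω)]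
    (κmet κcer θ l : ℝ) (hmet : 0 < κmet) (hcer : 0 < κcer) (hθ : θ ∈ Set.Icc (0 : ℝ) 1)
    (X : ℕ → Ω → ℝ) (hmeas : ∀ q, Measurable (X q))
    (hval : ∀ q ω, X q ω = 0 ∨ X q ω = 1)
    (hindep : iIndepFun X ℙ)
    (hdist : ∀ q, ℙ {ω | X q ω = 1} = ENNReal.ofReal θ) :
    ∀ᵐ ω : Ω, Filter.Tendsto
      (fun δ : ℝ => l * (∫ x in (0 : ℝ)..1, (κmet + (κcer - κmet) * X ⌊x / δ⌋₊ ω)⁻¹)⁻¹)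
      (nhdsWithin 0 (Set.Ioi 0))
      (nhds (l * ((1 - θ) / κmet + θ / κcer)⁻¹)) := by
  obtain ⟨hθ0, hθ1⟩ := hθ
  set f : ℝ → ℝ := fun t => (κmet + (κcer - κmet) * t)⁻¹ with hf
  have hfm : Measurable f := by fun_prop
  have hbound : ∀ q ω, ‖f (X q ω)‖ ≤ max ‖f 0‖ ‖f 1‖ := fun q ω => by
    rcases hval q ω with h | h <;> simp [h]
  have hident : ∀ q, IdentDistrib (X q) (X 0) :=
    fun q => identDistrib_of_forall_eq_zero_or_one (hmeas q) (hmeas 0) (hval q) (hval 0)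
      (by rw [hdist, hdist])
  have hint : Integrable (fun ω => f (X 0 ω)) :=
    .of_bound (hfm.comp (hmeas 0)).aestronglyMeasurable _ (.of_forall (hbound 0))
  have hmean : ∫ ω, f (X 0 ω) = (1 - θ) / κmet + θ / κcer := by
    rw [integral_comp_of_forall_eq_zero_or_one (hmeas 0) (hval 0) hfm, measureReal_def, hdist,
      ENNReal.toReal_ofReal hθ0]
    simp [hf, div_eq_mul_inv, add_comm]
  have hpos : 0 < (1 - θ) / κmet + θ / κcer := by
    rcases hθ0.lt_or_eq with hθ | rfl
    · exact add_pos_of_nonneg_of_pos (div_nonneg (sub_nonneg.2 hθ1) hmet.le) (div_pos hθ hcer)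
    · simpa using hmet
  filter_upwards [strong_law_ae (fun q ω => f (X q ω)) hint
    (fun i j hij => (hindep.indepFun hij).comp hfm hfm) fun q => (hident q).comp hfm] with ω hω
  rw [hmean] at hω
  exact ((tendsto_integral_comp_natFloor_div (hbound · ω) hω).inv₀ hpos.ne').const_mul l
end

section
/- Let λ₀, μ₀ > 0, l ∈ ℝ, set ν₀ := λ₀/(λ₀ + 2μ₀), and define u₀ : [0,1]² → ℝ² by u₀(x) := (−ν₀ l x₁ + ν₀ l/2, l x₂). Then u₀ satisfies the boundary conditions (u₀)₂(x₁, 0) = 0 and (u₀)₂(x₁, 1) = l, the first component has zero mean over (0,1)², and for every continuously differentiable v : [0,1]² → ℝ² with v₂(x₁,0) = v₂(x₁,1) = 0 for all x₁ ∈ [0,1] one has ∫_{[0,1]²} [λ₀ tr(∇^s u₀) tr(∇^s v) + 2μ₀ (∇^s u₀) : (∇^s v)] dx = 0. -/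
/-!
The strain `ε = ∇^s u₀` is the constant diagonal matrix `diag(-ν₀ l, l)`, so the integrand of the
weak form is `σ₁₁ ∂₁v₁ + σ₂₂ ∂₂v₂` with the constant stresses `σᵢᵢ = λ₀ tr ε + 2μ₀ εᵢᵢ`.
The Poisson number makes `σ₁₁ = 0`, and by the fundamental theorem of calculus in `x₂` the integral of
`∂₂v₂` over the square is `∫ (v₂(x₁, 1) - v₂(x₁, 0)) dx₁ = 0`.
-/
open MeasureTheory Matrix

/-- The displacement gradient `∇w` of a map `w : ℝ² → ℝ²` as a 2×2 matrix,
`(∇w)_{ij} = ∂_j w_i`. -/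
noncomputable def gradMat (w : ℝ × ℝ → ℝ × ℝ) (x : ℝ × ℝ) : Matrix (Fin 2) (Fin 2) ℝ :=
  Matrix.of fun i j =>
    (fun p : ℝ × ℝ => if i = 0 then p.1 else p.2)
      (fderiv ℝ w x (if j = 0 then ((1 : ℝ), (0 : ℝ)) else ((0 : ℝ), (1 : ℝ))))

/-- The symmetrized gradient `∇^s w = (∇w + (∇w)ᵀ)/2`. -/
noncomputable def symGrad (w : ℝ × ℝ → ℝ × ℝ) (x : ℝ × ℝ) : Matrix (Fin 2) (Fin 2) ℝ :=
  (2 : ℝ)⁻¹ • (gradMat w x + (gradMat w x)ᵀ)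

/-- The double-dot (Frobenius) product `A : B = tr(Aᵀ B)`. -/
noncomputable def ddot (A B : Matrix (Fin 2) (Fin 2) ℝ) : ℝ := (Aᵀ * B).trace

open Set

theorem gradMat_eq_diagonal_of_affine {u : ℝ × ℝ → ℝ × ℝ} {a b c d : ℝ}
    (hu : ∀ y, u y = (a * y.1 + b, c * y.2 + d)) (x : ℝ × ℝ) :
    gradMat u x = diagonal ![a, c] := by
  have hderiv : HasFDerivAt u ((a • ContinuousLinearMap.fst ℝ ℝ ℝ).prod
      (c • ContinuousLinearMap.snd ℝ ℝ ℝ)) x := by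
    rw [funext hu]
    exact ((hasFDerivAt_fst.const_mul a).add_const b).prodMk
      ((hasFDerivAt_snd.const_mul c).add_const d)
  ext i j
  fin_cases i <;> fin_cases j <;> simp [gradMat, hderiv.fderiv]

theorem lame_form_of_gradMat_eq_diagonal {u : ℝ × ℝ → ℝ × ℝ} {x : ℝ × ℝ} {a c : ℝ}
    (hu : gradMat u x = diagonal ![a, c]) (lam mu : ℝ) (v : ℝ × ℝ → ℝ × ℝ) :
    lam * (symGrad u x).trace * (symGrad v x).trace + 2 * mu * ddot (symGrad u x) (symGrad v x)
      = (lam * (a + c) + 2 * mu * a) * gradMat v x 0 0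
        + (lam * (a + c) + 2 * mu * c) * gradMat v x 1 1 := by
  simp only [symGrad, ddot, hu, trace_fin_two, mul_apply, Fin.sum_univ_two, Matrix.smul_apply,
    Matrix.add_apply, transpose_apply, diagonal_apply_eq, diagonal_apply_ne _ zero_ne_one,
    diagonal_apply_ne _ one_ne_zero, cons_val_zero, cons_val_one, smul_eq_mul]
  ring

theorem gradMat_one_one {v : ℝ × ℝ → ℝ × ℝ} {x : ℝ × ℝ} (hv : DifferentiableAt ℝ v x) :
    gradMat v x 1 1 = fderiv ℝ (fun y => (v y).2) x (0, 1) := by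
  simp [gradMat, fderiv.snd hv]

theorem setIntegral_Icc_prod_fderiv_snd {f : ℝ × ℝ → ℝ} (hf : ContDiff ℝ 1 f) (a b : ℝ)
    {c d : ℝ} (hcd : c ≤ d) :
    ∫ x in Icc a b ×ˢ Icc c d, fderiv ℝ f x (0, 1)
      = ∫ x₁ in Icc a b, (f (x₁, d) - f (x₁, c)) := by
  have hcont : Continuous fun x => fderiv ℝ f x (0, 1) :=
    (hf.continuous_fderiv one_ne_zero).clm_apply continuous_const
  have hint : IntegrableOn (fun x => fderiv ℝ f x (0, 1)) (Icc a b ×ˢ Icc c d)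
      (volume.prod volume) :=
    hcont.continuousOn.integrableOn_compact (isCompact_Icc.prod isCompact_Icc)
  rw [Measure.volume_eq_prod, setIntegral_prod _ hint]
  refine setIntegral_congr_fun measurableSet_Icc fun x₁ _ => ?_
  rw [integral_Icc_eq_integral_Ioc, ← intervalIntegral.integral_of_le hcd]
  refine intervalIntegral.integral_eq_sub_of_hasDerivAt (f := fun y => f (x₁, y)) (fun t _ => ?_)
    ((hcont.comp (Continuous.prodMk_right x₁)).intervalIntegrable c d)
  have hline : HasDerivAt (fun y : ℝ => (x₁, y)) ((0 : ℝ), (1 : ℝ)) t :=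
    (hasDerivAt_const t x₁).prodMk (hasDerivAt_id t)
  exact ((hf.differentiable one_ne_zero _).hasFDerivAt.comp_hasDerivAt t hline)

theorem setIntegral_Icc_prod_comp_fst (g : ℝ → ℝ) {a b c d : ℝ} (hab : a ≤ b) (hcd : c ≤ d) :
    ∫ x in Icc a b ×ˢ Icc c d, g x.1 = (d - c) * ∫ t in a..b, g t := by
  have := setIntegral_prod_mul (μ := volume) (ν := volume) g (fun _ => (1 : ℝ)) (Icc a b) (Icc c d)
  rw [Measure.volume_eq_prod, intervalIntegral.integral_of_le hab, ← integral_Icc_eq_integral_Ioc]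
  simpa [hcd, mul_comm] using this

/-- The explicit affine displacement `u₀(x) = (-ν₀ l x₁ + ν₀ l/2, l x₂)` with Poisson
number `ν₀ = λ₀/(λ₀ + 2μ₀)` satisfies the greased Dirichlet boundary conditions, has
zero-mean first component, and is a weak solution of the homogeneous two-dimensional
tensile test: `∫ [λ₀ tr(∇^s u₀) tr(∇^s v) + 2μ₀ (∇^s u₀) : (∇^s v)] dx = 0` for all C¹
test functions `v` whose second component vanishes on the top and bottom boundary. -/
theorem stmt8 (l lam0 mu0 : ℝ) (hlam : 0 < lam0) (hmu : 0 < mu0)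
    (ν₀ : ℝ) (hν : ν₀ = lam0 / (lam0 + 2 * mu0))
    (u₀ : ℝ × ℝ → ℝ × ℝ)
    (hu₀ : ∀ x : ℝ × ℝ, u₀ x = (-(ν₀ * l) * x.1 + ν₀ * l / 2, l * x.2)) :
    (∀ x₁ : ℝ, (u₀ (x₁, 0)).2 = 0) ∧
    (∀ x₁ : ℝ, (u₀ (x₁, 1)).2 = l) ∧
    (∫ x in Set.Icc (0 : ℝ) 1 ×ˢ Set.Icc (0 : ℝ) 1, (u₀ x).1 = 0) ∧
    (∀ v : ℝ × ℝ → ℝ × ℝ, ContDiff ℝ 1 v →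
      (∀ x₁ ∈ Set.Icc (0 : ℝ) 1, (v (x₁, 0)).2 = 0 ∧ (v (x₁, 1)).2 = 0) →
      ∫ x in Set.Icc (0 : ℝ) 1 ×ˢ Set.Icc (0 : ℝ) 1,
        (lam0 * (symGrad u₀ x).trace * (symGrad v x).trace
          + 2 * mu0 * ddot (symGrad u₀ x) (symGrad v x)) = 0) := by
  refine ⟨by simp [hu₀], by simp [hu₀], ?_, fun v hv hbc => ?_⟩
  · simp only [hu₀]
    rw [setIntegral_Icc_prod_comp_fst (fun t => -(ν₀ * l) * t + ν₀ * l / 2) zero_le_one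
      zero_le_one, intervalIntegral.integral_add
        ((continuous_const_mul _).intervalIntegrable 0 1) intervalIntegrable_const,
      intervalIntegral.integral_const_mul, integral_id, intervalIntegral.integral_const]
    simp only [smul_eq_mul]
    ring
  · have hgrad : ∀ x, gradMat u₀ x = diagonal ![-(ν₀ * l), l] :=
      gradMat_eq_diagonal_of_affine (b := ν₀ * l / 2) (d := 0) (by simp [hu₀])
    have hstress : lam0 * (-(ν₀ * l) + l) + 2 * mu0 * -(ν₀ * l) = 0 := by
      rw [hν]; field_simp; ring
    simp_rw [lame_form_of_gradMat_eq_diagonal (hgrad _), hstress, zero_mul, zero_add,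
      gradMat_one_one (hv.differentiable one_ne_zero _)]
    rw [integral_const_mul, setIntegral_Icc_prod_fderiv_snd hv.snd 0 1 zero_le_one,
      setIntegral_congr_fun measurableSet_Icc fun x₁ hx₁ => by
        rw [(hbc x₁ hx₁).1, (hbc x₁ hx₁).2, sub_zero]]
    simp
end

section
/- Let λ₀, μ₀ > 0, l ∈ ℝ, ν₀ := λ₀/(λ₀ + 2μ₀), and let λ̄, μ̄ ∈ ℝ be constants. Define u₀(x) := (−ν₀ l x₁ + ν₀ l/2, l x₂) and u₁^hom(x) := (−2c x₁ + 1, 0) with c := (λ̄ (1 − ν₀) l − 2 μ̄ ν₀ l)/(2(λ₀ + 2μ₀)). Then for every continuously differentiable v : [0,1]² → ℝ² with v₂(x₁,0) = v₂(x₁,1) = 0 for all x₁ ∈ [0,1], it holds that ∫_{[0,1]²} [λ₀ tr(∇^s u₁^hom) tr(∇^s v) + 2μ₀ (∇^s u₁^hom) : (∇^s v)] dx = − ∫_{[0,1]²} [λ̄ tr(∇^s u₀) tr(∇^s v) + 2 μ̄ (∇^s u₀) : (∇^s v)] dx. -/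
open MeasureTheory Matrix

/-!
Both displacements are affine with diagonal constant gradients, so each side of the identity is
a combination of `∫ ∂₁v₁` and `∫ ∂₂v₂`. The latter vanishes because `v₂ = 0` on `Γ₁`
(integrate in `x₂` first), and `c` is chosen exactly so that the coefficients of `∫ ∂₁v₁` match.
-/

lemma gradMat_of_affine {u : ℝ × ℝ → ℝ × ℝ} {a b d k e m : ℝ}
    (hu : ∀ p : ℝ × ℝ, u p = (a * p.1 + b * p.2 + e, d * p.1 + k * p.2 + m)) (x : ℝ × ℝ) :
    gradMat u x = !![a, b; d, k] := by
  let L : ℝ × ℝ →L[ℝ] ℝ × ℝ :=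
    (a • ContinuousLinearMap.fst ℝ ℝ ℝ + b • ContinuousLinearMap.snd ℝ ℝ ℝ).prod
      (d • ContinuousLinearMap.fst ℝ ℝ ℝ + k • ContinuousLinearMap.snd ℝ ℝ ℝ)
  have hL : u = fun p => L p + (e, m) := by
    funext p
    simp [hu, L]
  have hderiv : fderiv ℝ u x = L := by
    rw [hL]
    exact (L.hasFDerivAt.add_const _).fderiv
  ext i j
  fin_cases i <;> fin_cases j <;> simp [gradMat, hderiv, L]

lemma continuous_gradMat_apply {v : ℝ × ℝ → ℝ × ℝ} (hv : ContDiff ℝ 1 v) (i j : Fin 2) :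
    Continuous fun x => gradMat v x i j := by
  have hfd : Continuous (fderiv ℝ v) := hv.continuous_fderiv one_ne_zero
  fin_cases i <;> fin_cases j <;>
    simp only [gradMat, Fin.zero_eta, Fin.mk_one, of_apply, one_ne_zero, if_true, if_false] <;>
    fun_prop

lemma lame_form_eq {u v : ℝ × ℝ → ℝ × ℝ} {x : ℝ × ℝ} {a b d k : ℝ}
    (hu : gradMat u x = !![a, b; d, k]) (α β : ℝ) :
    α * (symGrad u x).trace * (symGrad v x).trace + 2 * β * ddot (symGrad u x) (symGrad v x)
      = (α * (a + k) + 2 * β * a) * gradMat v x 0 0 + (α * (a + k) + 2 * β * k) * gradMat v x 1 1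
        + β * (b + d) * (gradMat v x 0 1 + gradMat v x 1 0) := by
  simp only [symGrad, ddot, hu, smul_add, smul_of, smul_cons, smul_eq_mul, smul_empty, trace_add,
    trace_fin_two, of_apply, cons_val', cons_val_zero, cons_val_fin_one, cons_val_one, trace_smul,
    trace_transpose, transpose_add, transpose_smul, transpose_transpose, mul_apply,
    Matrix.add_apply, transpose_apply, Matrix.smul_apply, Fin.sum_univ_two]
  ring

lemma setIntegral_gradMat_one_one_Icc_prod_Icc {v : ℝ × ℝ → ℝ × ℝ} (hv : ContDiff ℝ 1 v)
    (a₁ b₁ a₂ b₂ : ℝ) (h₂ : a₂ ≤ b₂) :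
    ∫ x in Set.Icc a₁ b₁ ×ˢ Set.Icc a₂ b₂, gradMat v x 1 1
      = ∫ x₁ in Set.Icc a₁ b₁, ((v (x₁, b₂)).2 - (v (x₁, a₂)).2) := by
  have hcont := continuous_gradMat_apply hv 1 1
  have hint : IntegrableOn (fun x => gradMat v x 1 1) (Set.Icc a₁ b₁ ×ˢ Set.Icc a₂ b₂) :=
    hcont.continuousOn.integrableOn_compact (isCompact_Icc.prod isCompact_Icc)
  rw [Measure.volume_eq_prod] at hint ⊢
  rw [setIntegral_prod _ hint]
  refine setIntegral_congr_fun measurableSet_Icc fun x₁ _ => ?_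
  have hderiv : ∀ t ∈ Set.uIcc a₂ b₂,
      HasDerivAt (fun t => (v (x₁, t)).2) (gradMat v (x₁, t) 1 1) t := fun t _ =>
    (((hv.differentiable one_ne_zero (x₁, t)).hasFDerivAt).comp_hasDerivAt t
      ((hasDerivAt_const t x₁).prodMk (hasDerivAt_id t))).snd
  have hftc := intervalIntegral.integral_eq_sub_of_hasDerivAt hderiv
    ((hcont.comp (continuous_const.prodMk continuous_id)).intervalIntegrable a₂ b₂)
  rwa [intervalIntegral.integral_of_le h₂, ← integral_Icc_eq_integral_Ioc] at hftc

lemma setIntegral_gradMat_one_one_eq_zero {v : ℝ × ℝ → ℝ × ℝ} (hv : ContDiff ℝ 1 v)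
    (hbc : ∀ x₁ ∈ Set.Icc (0 : ℝ) 1, (v (x₁, 0)).2 = 0 ∧ (v (x₁, 1)).2 = 0) :
    ∫ x in Set.Icc (0 : ℝ) 1 ×ˢ Set.Icc (0 : ℝ) 1, gradMat v x 1 1 = 0 := by
  rw [setIntegral_gradMat_one_one_Icc_prod_Icc hv 0 1 0 1 zero_le_one]
  refine (setIntegral_congr_fun measurableSet_Icc fun x₁ hx₁ => ?_).trans (integral_zero _ _)
  simp [(hbc x₁ hx₁).1, (hbc x₁ hx₁).2]

lemma setIntegral_linearComb_gradMat_diag {v : ℝ × ℝ → ℝ × ℝ} (hv : ContDiff ℝ 1 v)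
    (s : Set (ℝ × ℝ)) (hs : IsCompact s) (p q : ℝ) :
    ∫ x in s, (p * gradMat v x 0 0 + q * gradMat v x 1 1)
      = p * (∫ x in s, gradMat v x 0 0) + q * ∫ x in s, gradMat v x 1 1 := by
  rw [integral_add, integral_const_mul, integral_const_mul] <;>
    exact ((continuous_gradMat_apply hv _ _).continuousOn.integrableOn_compact hs).const_mul _

theorem stmt9_general (l lam0 mu0 lbar mbar : ℝ) (hlam : 0 < lam0) (hmu : 0 < mu0)
    (ν₀ : ℝ)
    (c : ℝ) (hcdef : c = (lbar * (1 - ν₀) * l - 2 * mbar * ν₀ * l) / (2 * (lam0 + 2 * mu0)))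
    (u₀ u₁hom : ℝ × ℝ → ℝ × ℝ)
    (hu₀ : ∀ x : ℝ × ℝ, u₀ x = (-(ν₀ * l) * x.1 + ν₀ * l / 2, l * x.2))
    (hu₁ : ∀ x : ℝ × ℝ, u₁hom x = (-2 * c * x.1 + 1, 0)) :
    ∀ v : ℝ × ℝ → ℝ × ℝ, ContDiff ℝ 1 v →
      (∀ x₁ ∈ Set.Icc (0 : ℝ) 1, (v (x₁, 0)).2 = 0 ∧ (v (x₁, 1)).2 = 0) →
      ∫ x in Set.Icc (0 : ℝ) 1 ×ˢ Set.Icc (0 : ℝ) 1,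
        (lam0 * (symGrad u₁hom x).trace * (symGrad v x).trace
          + 2 * mu0 * ddot (symGrad u₁hom x) (symGrad v x))
      = - ∫ x in Set.Icc (0 : ℝ) 1 ×ˢ Set.Icc (0 : ℝ) 1,
        (lbar * (symGrad u₀ x).trace * (symGrad v x).trace
          + 2 * mbar * ddot (symGrad u₀ x) (symGrad v x)) := by
  intro v hv hbc
  have hgrad₁ : ∀ x, gradMat u₁hom x = !![-2 * c, 0; 0, 0] :=
    gradMat_of_affine (e := 1) (m := 0) fun p => by simp [hu₁]
  have hgrad₀ : ∀ x, gradMat u₀ x = !![-(ν₀ * l), 0; 0, l] :=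
    gradMat_of_affine (e := ν₀ * l / 2) (m := 0) fun p => by simp [hu₀]
  simp only [lame_form_eq (hgrad₁ _), lame_form_eq (hgrad₀ _), add_zero, mul_zero, zero_mul]
  have hsquare : IsCompact (Set.Icc (0 : ℝ) 1 ×ˢ Set.Icc (0 : ℝ) 1) :=
    isCompact_Icc.prod isCompact_Icc
  rw [setIntegral_linearComb_gradMat_diag hv _ hsquare, setIntegral_linearComb_gradMat_diag hv _ hsquare,
    setIntegral_gradMat_one_one_eq_zero hv hbc]
  have hc : -2 * c * (lam0 + 2 * mu0) = -(lbar * (1 - ν₀) * l - 2 * mbar * ν₀ * l) := by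
    have hsum : lam0 + 2 * mu0 ≠ 0 := by positivity
    rw [hcdef]
    field_simp
  linear_combination (∫ x in Set.Icc (0 : ℝ) 1 ×ˢ Set.Icc (0 : ℝ) 1, gradMat v x 0 0) * hc

/-- The explicit affine function `u₁^hom(x) = (-2c x₁ + 1, 0)` with
`c = (λ̄(1-ν₀)l - 2μ̄ν₀l)/(2(λ₀+2μ₀))` is the first-order corrector of the homogenized
tensile test: for all admissible C¹ test functions `v`,
`∫ [λ₀ tr(∇^s u₁^hom) tr(∇^s v) + 2μ₀ (∇^s u₁^hom):(∇^s v)]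
  = -∫ [λ̄ tr(∇^s u₀) tr(∇^s v) + 2μ̄ (∇^s u₀):(∇^s v)]`. -/
theorem stmt9 (l lam0 mu0 lbar mbar : ℝ) (hlam : 0 < lam0) (hmu : 0 < mu0)
    (ν₀ : ℝ) (hν : ν₀ = lam0 / (lam0 + 2 * mu0))
    (c : ℝ) (hcdef : c = (lbar * (1 - ν₀) * l - 2 * mbar * ν₀ * l) / (2 * (lam0 + 2 * mu0)))
    (u₀ u₁hom : ℝ × ℝ → ℝ × ℝ)
    (hu₀ : ∀ x : ℝ × ℝ, u₀ x = (-(ν₀ * l) * x.1 + ν₀ * l / 2, l * x.2))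
    (hu₁ : ∀ x : ℝ × ℝ, u₁hom x = (-2 * c * x.1 + 1, 0)) :
    ∀ v : ℝ × ℝ → ℝ × ℝ, ContDiff ℝ 1 v →
      (∀ x₁ ∈ Set.Icc (0 : ℝ) 1, (v (x₁, 0)).2 = 0 ∧ (v (x₁, 1)).2 = 0) →
      ∫ x in Set.Icc (0 : ℝ) 1 ×ˢ Set.Icc (0 : ℝ) 1,
        (lam0 * (symGrad u₁hom x).trace * (symGrad v x).trace
          + 2 * mu0 * ddot (symGrad u₁hom x) (symGrad v x))
      = - ∫ x in Set.Icc (0 : ℝ) 1 ×ˢ Set.Icc (0 : ℝ) 1,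
        (lbar * (symGrad u₀ x).trace * (symGrad v x).trace
          + 2 * mbar * ddot (symGrad u₀ x) (symGrad v x)) :=
  stmt9_general l lam0 mu0 lbar mbar hlam hmu ν₀ c hcdef u₀ u₁hom hu₀ hu₁
end
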